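/- Let Π be a Boolean MDDLog program over EDB schema S_E and D a set of disjointness constraints over S_E such that Π is semi-simple w.r.t. D. Then Π is empty w.r.t. D if and only if K_θ ⊭ Π for every 0-type θ. -/

import Mathlib

namespace MDDLogPaper

/-! ### Relation symbols, facts, instances, schemas -/

/-- A relation symbol: a name together with an arity.  Names are drawn from the
countably infinite supply `ℕ`. -/
structure RelSym where
  name : ℕ
  arity : ℕ
deriving DecidableEq

/-- A fact: a relation symbol applied to a tuple of constants. Constants are
drawn from the fixed countably infinite set `ℕ`. -/
structure Fact where
  rel : RelSym
  args : List ℕ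
deriving DecidableEq

/-- An instance is a finite set of facts. -/
abbrev Instance := Finset Fact

/-- A schema is a finite set of relation symbols. -/
abbrev Schema := Finset RelSym

/-- `I` is an `S`-instance: every fact of `I` uses a relation symbol of `S`,
applied to a tuple of constants of matching length. -/
def InstanceOver (S : Schema) (I : Instance) : Prop :=
  ∀ f ∈ I, f.rel ∈ S ∧ f.args.length = f.rel.arity

/-- The active domain of an instance: all constants occurring in its facts. -/
def adom (I : Instance) : Finset ℕ :=
  I.biUnion fun f => f.args.toFinset

/-! ### Homomorphisms -/

/-- `h` is a homomorphism from `I` to `J`. -/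
def IsHom (h : ℕ → ℕ) (I J : Instance) : Prop :=
  ∀ f ∈ I, (⟨f.rel, f.args.map h⟩ : Fact) ∈ J

/-- There is a homomorphism from `I` to `J`. -/
def HomTo (I J : Instance) : Prop := ∃ h, IsHom h I J

/-! ### Cycles and girth -/

/-- `I` has a cycle of length `n`: there are `n` distinct facts
`R₀(a₀), …, R_{n-1}(a_{n-1})` in `I` and positions `pᵢ ≠ pᵢ'` of `Rᵢ` such that
the constant of `aᵢ` at position `pᵢ'` equals the constant of `a_{i⊕1}` at
position `p_{i⊕1}` (⊕ is addition modulo `n`). -/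
def HasCycle (I : Instance) (n : ℕ) : Prop :=
  0 < n ∧ ∃ f : ℕ → Fact, ∃ p p' : ℕ → ℕ,
    (∀ i < n, f i ∈ I) ∧
    (∀ i < n, ∀ j < n, i ≠ j → f i ≠ f j) ∧
    (∀ i < n, p i ≠ p' i ∧ p i < (f i).args.length ∧ p' i < (f i).args.length) ∧
    (∀ i < n, (f i).args.getD (p' i) 0 = (f ((i + 1) % n)).args.getD (p ((i + 1) % n)) 0)

/-- The girth of `I` exceeds `k`: `I` has no cycle of length at most `k`. -/
def GirthGT (I : Instance) (k : ℕ) : Prop := ∀ n ≤ k, ¬ HasCycle I n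

/-! ### (Monadic) disjunctive Datalog: syntax -/

/-- An atom: a relation symbol applied to variables (variables are drawn from
the countably infinite supply `ℕ`). -/
structure Atom where
  rel : RelSym
  args : List ℕ
deriving DecidableEq

instance : Inhabited Atom := ⟨⟨⟨0, 0⟩, []⟩⟩

/-- The fact obtained by applying a variable assignment to an atom. -/
def Atom.subst (h : ℕ → ℕ) (a : Atom) : Fact := ⟨a.rel, a.args.map h⟩

/-- A disjunctive Datalog rule `S₁(x₁) ∨ … ∨ Sₘ(xₘ) ← R₁(y₁) ∧ … ∧ Rₙ(yₙ)`,
given by the list of its head atoms and the list of its body atoms. -/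
structure Rule where
  head : List Atom
  body : List Atom
deriving DecidableEq

def Rule.headVars (ρ : Rule) : List ℕ := (ρ.head.map Atom.args).flatten
def Rule.bodyVars (ρ : Rule) : List ℕ := (ρ.body.map Atom.args).flatten
def Rule.vars (ρ : Rule) : List ℕ := ρ.headVars ++ ρ.bodyVars

/-- Well-formed rule: the body is nonempty, atoms respect arities, and every
variable occurring in the head also occurs in the body. -/
def Rule.WF (ρ : Rule) : Prop :=
  ρ.body ≠ [] ∧ (∀ a ∈ ρ.head ++ ρ.body, a.args.length = a.rel.arity) ∧
    ∀ x ∈ ρ.headVars, x ∈ ρ.bodyVars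

/-- A disjunctive Datalog program: a finite set of rules together with a
selected goal relation. -/
structure Program where
  rules : List Rule
  goal : RelSym
deriving DecidableEq

/-- All relation symbols occurring in the program. -/
def Program.rels (P : Program) : List RelSym :=
  (P.rules.map fun ρ => (ρ.head ++ ρ.body).map Atom.rel).flatten

/-- The IDB relations: relation symbols occurring in some rule head. -/
def Program.idb (P : Program) : List RelSym :=
  (P.rules.map fun ρ => ρ.head.map Atom.rel).flatten

def Program.IsIDB (P : Program) (R : RelSym) : Prop := R ∈ P.idb

/-- Well-formed program: all rules are well formed, the goal relation does not
occur in rule bodies, and occurs in heads only as the single disjunct of a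
(non-disjunctive) goal rule. -/
def Program.WF (P : Program) : Prop :=
  (∀ ρ ∈ P.rules, ρ.WF) ∧
  (∀ ρ ∈ P.rules, ∀ a ∈ ρ.body, a.rel ≠ P.goal) ∧
  (∀ ρ ∈ P.rules, ∀ a ∈ ρ.head, a.rel = P.goal → ρ.head = [a])

/-- Monadic: every IDB relation except the goal relation has arity at most one. -/
def Program.Monadic (P : Program) : Prop :=
  ∀ R ∈ P.idb, R ≠ P.goal → R.arity ≤ 1

/-- Boolean: the goal relation is nullary. -/
def Program.Boolean (P : Program) : Prop := P.goal.arity = 0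

/-- `P` is a program over EDB schema `S`: the EDB relations of `P` (the
relation symbols of `P` that do not occur in rule heads) all belong to `S`,
and `S` contains no IDB relation of `P` and not the goal relation. -/
def Program.EDBOver (P : Program) (S : Schema) : Prop :=
  (∀ R ∈ P.rels, ¬ P.IsIDB R → R ∈ S) ∧ (∀ R ∈ S, ¬ P.IsIDB R ∧ R ≠ P.goal)

/-- `P` is a Boolean MDDLog program over EDB schema `S`. -/
def BooleanMDDLogOver (S : Schema) (P : Program) : Prop :=
  P.WF ∧ P.Monadic ∧ P.Boolean ∧ P.EDBOver S

/-! ### Semantics -/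

/-- An instance satisfies a rule if every assignment making all body atoms true
makes some head atom true. -/
def Rule.SatisfiedIn (ρ : Rule) (J : Instance) : Prop :=
  ∀ h : ℕ → ℕ, (∀ a ∈ ρ.body, a.subst h ∈ J) → ∃ a ∈ ρ.head, a.subst h ∈ J

/-- `J` is a model of the program `P`: it satisfies all rules of `P`. -/
def Program.ModelOf (P : Program) (J : Instance) : Prop :=
  ∀ ρ ∈ P.rules, ρ.SatisfiedIn J

/-- Boolean semantics: `I ⊨ P` iff `goal() ∈ J` for every model `J` of `P`
with `I ⊆ J`. -/
def Program.Sat (P : Program) (I : Instance) : Prop :=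
  ∀ J : Instance, I ⊆ J → P.ModelOf J → (⟨P.goal, []⟩ : Fact) ∈ J

/-- `as ∈ P(I)` for a program `P` of arbitrary arity:
`as` is a tuple over the active domain of `I` of length the arity of the goal
relation and `goal(as) ∈ J` for every model `J` of `P` with `I ⊆ J`. -/
def Program.Answers (P : Program) (I : Instance) (as : List ℕ) : Prop :=
  as.length = P.goal.arity ∧ (∀ x ∈ as, x ∈ adom I) ∧
  ∀ J : Instance, I ⊆ J → P.ModelOf J → (⟨P.goal, as⟩ : Fact) ∈ J

/-- Containment of Boolean programs over the EDB schema `S`. -/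
def Contained (S : Schema) (P₁ P₂ : Program) : Prop :=
  ∀ I : Instance, InstanceOver S I → P₁.Sat I → P₂.Sat I

/-- Containment of Boolean programs over `S`-instances of girth exceeding `k`. -/
def ContainedGirth (S : Schema) (k : ℕ) (P₁ P₂ : Program) : Prop :=
  ∀ I : Instance, InstanceOver S I → GirthGT I k → P₁.Sat I → P₂.Sat I

/-! ### Size measures -/

def Atom.size (a : Atom) : ℕ := 1 + a.args.length

def Rule.size (ρ : Rule) : ℕ := ((ρ.head ++ ρ.body).map Atom.size).sum

/-- The size of a program: the number of symbols needed to write it, counting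
relation and variable names as length one. -/
def Program.size (P : Program) : ℕ := (P.rules.map Rule.size).sum

/-- Number of distinct variables of a rule. -/
def Rule.varWidth (ρ : Rule) : ℕ := ρ.vars.dedup.length

/-- Variable width of a set of rules: maximum number of variables in a rule. -/
def rulesVarWidth (rs : List Rule) : ℕ := (rs.map Rule.varWidth).foldr max 0

def Program.varWidth (P : Program) : ℕ := rulesVarWidth P.rules

/-- Atom width of a set of rules: maximum number of atoms in a rule body. -/
def rulesAtomWidth (rs : List Rule) : ℕ := (rs.map fun ρ => ρ.body.length).foldr max 0

/-- Rule size of a set of rules: maximum size of a rule. -/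
def rulesMaxRuleSize (rs : List Rule) : ℕ := (rs.map Rule.size).foldr max 0

/-! ### Simple programs -/

/-- A rule is simple relative to a notion of EDB relation: it contains at most
one EDB atom, any such EDB atom contains all variables of the rule body, each
exactly once, and if there is no EDB atom then the body has at most one
variable. -/
def SimpleRule (isEDB : RelSym → Prop) (ρ : Rule) : Prop :=
  (∀ a ∈ ρ.body, ∀ b ∈ ρ.body, isEDB a.rel → isEDB b.rel → a = b) ∧
  (∀ a ∈ ρ.body, isEDB a.rel → ∀ x ∈ ρ.bodyVars, a.args.count x = 1) ∧
  ((∀ a ∈ ρ.body, ¬ isEDB a.rel) → ρ.bodyVars.dedup.length ≤ 1)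

/-- A simple MDDLog program. -/
def Program.Simple (P : Program) : Prop :=
  ∀ ρ ∈ P.rules, SimpleRule (fun R => ¬ P.IsIDB R) ρ

/-! ### Disjointness constraints -/

/-- A disjointness constraint `⊥ ← P₁(x) ∧ … ∧ Pₙ(x)`, given by the list of
its relations. -/
structure Constraint where
  rels : List RelSym
deriving DecidableEq

/-- Well-formed disjointness constraint: nonempty, and all relations have the
same arity, which is at most one. -/
def Constraint.WF (c : Constraint) : Prop :=
  c.rels ≠ [] ∧ ∃ k ≤ 1, ∀ P ∈ c.rels, P.arity = k

/-- `I` satisfies the disjointness constraint `c`: there is no tuple to which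
all relations of `c` apply in `I`. -/
def Constraint.SatisfiedIn (c : Constraint) (I : Instance) : Prop :=
  ¬ ∃ args : List ℕ, ∀ P ∈ c.rels, args.length = P.arity ∧ (⟨P, args⟩ : Fact) ∈ I

def SatisfiesAll (D : List Constraint) (I : Instance) : Prop :=
  ∀ c ∈ D, c.SatisfiedIn I

/-- The relation symbols occurring in a set of disjointness constraints. -/
def constraintRels (D : List Constraint) : List RelSym :=
  (D.map Constraint.rels).flatten

def ConstraintsOver (S : Schema) (D : List Constraint) : Prop :=
  ∀ R ∈ constraintRels D, R ∈ S

/-- `P` is semi-simple w.r.t. `D`: `P` is simple when all relations occurring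
in `D` are viewed as IDB relations. -/
def Program.SemiSimple (P : Program) (D : List Constraint) : Prop :=
  ∀ ρ ∈ P.rules, SimpleRule (fun R => ¬ P.IsIDB R ∧ R ∉ constraintRels D) ρ

/-- `P` is empty w.r.t. `D` (on `S`-instances). -/
def Program.EmptyWrt (P : Program) (S : Schema) (D : List Constraint) : Prop :=
  ∀ I : Instance, InstanceOver S I → SatisfiesAll D I → ¬ P.Sat I

def constraintsSize (D : List Constraint) : ℕ :=
  (D.map fun c => 1 + c.rels.length).sum

/-- Variable width of a set of disjointness constraints (each constraint uses
a single variable when its relations are unary, none when nullary). -/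
def constraintsVarWidth (D : List Constraint) : ℕ :=
  (D.map fun c => (c.rels.map RelSym.arity).foldr max 0).foldr max 0

/-! ### 0-types, 1-types -/

/-- A 0-type for `D`: a set of nullary relation symbols from the relations of
`D` that does not contain all relations co-occurring in some constraint of `D`. -/
def Is0Type (D : List Constraint) (θ : Finset RelSym) : Prop :=
  (∀ P ∈ θ, P.arity = 0 ∧ P ∈ constraintRels D) ∧
  ∀ c ∈ D, ¬ ∀ P ∈ c.rels, P ∈ θ

/-- A 1-type for `D`. -/
def Is1Type (D : List Constraint) (t : Finset RelSym) : Prop :=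
  (∀ P ∈ t, P.arity = 1 ∧ P ∈ constraintRels D) ∧
  ∀ c ∈ D, ¬ ∀ P ∈ c.rels, P ∈ t

/-- The 0-type of `I` is contained in `θ`. -/
def ZeroTypeLE (D : List Constraint) (I : Instance) (θ : Finset RelSym) : Prop :=
  ∀ P : RelSym, P.arity = 0 → P ∈ constraintRels D → (⟨P, []⟩ : Fact) ∈ I → P ∈ θ

/-- Specification of the facts of the instance `K_θ`, with constants given by
an (injective) encoding `e` of 1-types: `P(t)` for each 1-type `t` and each
`P ∈ t`; `R(t₁,…,tₙ)` for each `R ∈ S \ S_D` and all 1-types `t₁,…,tₙ`; and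
`P()` for each nullary `P ∈ θ`. -/
def KSpec (S : Schema) (D : List Constraint) (e : Finset RelSym → ℕ)
    (θ : Finset RelSym) (f : Fact) : Prop :=
  (∃ t : Finset RelSym, Is1Type D t ∧ ∃ P ∈ t, f = ⟨P, [e t]⟩) ∨
  (∃ R ∈ S, R ∉ constraintRels D ∧
    ∃ ts : List (Finset RelSym), ts.length = R.arity ∧ (∀ t ∈ ts, Is1Type D t) ∧
      f = ⟨R, ts.map e⟩) ∨
  (∃ P ∈ θ, f = ⟨P, []⟩)

/-! ### Conjunctive queries -/

/-- A Boolean conjunctive query: a finite conjunction of atoms, all variables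
existentially quantified. -/
abbrev CQ := List Atom

/-- `I ⊨ q` for a Boolean CQ `q`. -/
def CQSat (q : CQ) (I : Instance) : Prop :=
  ∃ h : ℕ → ℕ, ∀ a ∈ q, a.subst h ∈ I

def CQOver (S : Schema) (q : CQ) : Prop :=
  ∀ a ∈ q, a.rel ∈ S ∧ a.args.length = a.rel.arity

def CQsize (q : CQ) : ℕ := (q.map Atom.size).sum

/-- Containment of a Boolean MDDLog program in a Boolean CQ. -/
def ContainedInCQ (S : Schema) (P : Program) (q : CQ) : Prop :=
  ∀ I : Instance, InstanceOver S I → P.Sat I → CQSat q I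

/-! ### Tiling problems -/

/-- A 2-exp tiling problem `(𝕋, ℍ, 𝕍)`: tile types with horizontal and
vertical matching relations. -/
structure TilingProblem where
  tiles : Finset ℕ
  H : Finset (ℕ × ℕ)
  V : Finset (ℕ × ℕ)

def TilingProblem.WF (P : TilingProblem) : Prop :=
  (∀ p ∈ P.H, p.1 ∈ P.tiles ∧ p.2 ∈ P.tiles) ∧
  (∀ p ∈ P.V, p.1 ∈ P.tiles ∧ p.2 ∈ P.tiles)

def TilingProblem.size (P : TilingProblem) : ℕ := P.tiles.card + P.H.card + P.V.card

/-- There is a tiling of the `2^{2^n} × 2^{2^n}` square for `P` and the input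
word `w` (where `n + 1` is the length of `w`). -/
def HasSquareTiling (P : TilingProblem) (w : List ℕ) : Prop :=
  ∃ f : ℕ → ℕ → ℕ,
    (∀ i < 2 ^ 2 ^ (w.length - 1), ∀ j < 2 ^ 2 ^ (w.length - 1), f i j ∈ P.tiles) ∧
    (∀ j < w.length, f 0 j = w.getD j 0) ∧
    (∀ i, ∀ j < 2 ^ 2 ^ (w.length - 1), i + 1 < 2 ^ 2 ^ (w.length - 1) → (f i j, f (i + 1) j) ∈ P.H) ∧
    (∀ i < 2 ^ 2 ^ (w.length - 1), ∀ j, j + 1 < 2 ^ 2 ^ (w.length - 1) → (f i j, f i (j + 1)) ∈ P.V)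

/-- There is a tiling of the `2^{2^n} × 2^{2^n}` torus for `P` and `w`. -/
def HasTorusTiling (P : TilingProblem) (w : List ℕ) : Prop :=
  ∃ f : ℕ → ℕ → ℕ,
    (∀ i < 2 ^ 2 ^ (w.length - 1), ∀ j < 2 ^ 2 ^ (w.length - 1), f i j ∈ P.tiles) ∧
    (∀ j < w.length, f 0 j = w.getD j 0) ∧
    (∀ i < 2 ^ 2 ^ (w.length - 1), ∀ j < 2 ^ 2 ^ (w.length - 1),
      (f i j, f ((i + 1) % 2 ^ 2 ^ (w.length - 1)) j) ∈ P.H) ∧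
    (∀ i < 2 ^ 2 ^ (w.length - 1), ∀ j < 2 ^ 2 ^ (w.length - 1),
      (f i j, f i ((j + 1) % 2 ^ 2 ^ (w.length - 1))) ∈ P.V)

/-! ### First-order rewritability -/

/-- First-order formulas over relational schemas, with variables from `ℕ`. -/
inductive FO where
  | atom (R : RelSym) (args : List ℕ)
  | eq (x y : ℕ)
  | fls
  | imp (φ ψ : FO)
  | all (x : ℕ) (φ : FO)

/-- Active-domain semantics of first-order formulas on instances. -/
def FO.Eval (I : Instance) : FO → (ℕ → ℕ) → Prop
  | .atom R args, h => (⟨R, args.map h⟩ : Fact) ∈ I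
  | .eq x y, h => h x = h y
  | .fls, _ => False
  | .imp φ ψ, h => FO.Eval I φ h → FO.Eval I ψ h
  | .all x φ, h => ∀ a ∈ adom I, FO.Eval I φ (Function.update h x a)

def FO.Over (S : Schema) : FO → Prop
  | .atom R args => R ∈ S ∧ args.length = R.arity
  | .eq _ _ => True
  | .fls => True
  | .imp φ ψ => FO.Over S φ ∧ FO.Over S ψ
  | .all _ φ => FO.Over S φ

def FOSat (I : Instance) (φ : FO) : Prop := ∀ h : ℕ → ℕ, FO.Eval I φ h

/-- `P` is rewritable into a first-order sentence over `S`. -/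
def FORewritable (S : Schema) (P : Program) : Prop :=
  ∃ φ : FO, FO.Over S φ ∧ ∀ I : Instance, InstanceOver S I → (P.Sat I ↔ FOSat I φ)

/-- A non-disjunctive Datalog program: every rule head consists of exactly one
atom. -/
def Program.IsDatalog (P : Program) : Prop := ∀ ρ ∈ P.rules, ρ.head.length = 1

/-- `P` is rewritable into a Boolean non-disjunctive Datalog program over `S`. -/
def DatalogRewritable (S : Schema) (P : Program) : Prop :=
  ∃ Γ : Program, Γ.WF ∧ Γ.Boolean ∧ Γ.IsDatalog ∧ Γ.EDBOver S ∧
    ∀ I : Instance, InstanceOver S I → (P.Sat I ↔ Γ.Sat I)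

/-! ### Connectedness and biconnectedness of rule bodies -/

/-- Two variables are adjacent in a body if they co-occur in one of its atoms. -/
def VarsAdj (B : List Atom) (x y : ℕ) : Prop := ∃ a ∈ B, x ∈ a.args ∧ y ∈ a.args

def bodyVarsList (B : List Atom) : List ℕ := (B.map Atom.args).flatten

/-- A body is connected if any two of its variables are linked by a path of
adjacent variables. -/
def ConnectedBody (B : List Atom) : Prop :=
  ∀ x ∈ bodyVarsList B, ∀ y ∈ bodyVarsList B, Relation.ReflTransGen (VarsAdj B) x y

/-- Remove a variable from a body: delete all atoms containing it. -/
def RemoveVar (B : List Atom) (x : ℕ) : List Atom :=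
  B.filter fun a => ¬ (a.args.contains x)

/-- A body is biconnected if removing any single variable (with all atoms
containing it) leaves it connected. -/
def Biconnected (B : List Atom) : Prop := ∀ x : ℕ, ConnectedBody (RemoveVar B x)

/-- A reflexive atom `R(x,…,x)`. -/
def ReflexiveAtom (a : Atom) : Prop := a.args ≠ [] ∧ ∃ x, ∀ y ∈ a.args, y = x

end MDDLogPaper

/-!
A model `J ⊇ K` of `Π` pulls back along a homomorphism `h : I → K` to the model
`{R(ā) | ā over adom I, R(h ā) ∈ J}` of `Π`, which contains `I` and contains `goal()` only if
`J` does; so `I ⊨ Π` implies `K ⊨ Π`. An `S`-instance `I` satisfying `D` maps to `K_θ`, for `θ`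
the 0-type of `I`, by sending each constant to its 1-type: as constraints have arity at most
one, every `S_D`-fact of `I` is nullary or unary and has a counterpart in `K_θ`. Conversely each
`K_θ` is an `S`-instance satisfying `D`, since `θ` and the 1-types do and 1-types are encoded
injectively.
-/

namespace MDDLogPaper

theorem finite_setOf_lists_length_eq {α : Type*} {s : Set α} (hs : s.Finite) (n : ℕ) :
    {l : List α | l.length = n ∧ ∀ x ∈ l, x ∈ s}.Finite := by
  have := hs.to_subtype
  refine ((List.finite_length_eq s n).image (List.map Subtype.val)).subset ?_
  rintro l ⟨hn, hl⟩
  lift l to List s using hl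
  exact ⟨l, by simpa using hn, rfl⟩

section Pullback

theorem finite_setOf_pullback (h : ℕ → ℕ) (A : Finset ℕ) (J : Instance) :
    {f : Fact | (∀ x ∈ f.args, x ∈ A) ∧ (⟨f.rel, f.args.map h⟩ : Fact) ∈ J}.Finite := by
  refine (J.finite_toSet.biUnion fun g _ =>
    (finite_setOf_lists_length_eq A.finite_toSet g.args.length).image
      fun as => (⟨g.rel, as⟩ : Fact)).subset ?_
  rintro ⟨R, as⟩ ⟨hA, hJ⟩
  exact Set.mem_biUnion hJ ⟨as, ⟨by simp, hA⟩, rfl⟩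

noncomputable def pullback (h : ℕ → ℕ) (A : Finset ℕ) (J : Instance) : Instance :=
  (finite_setOf_pullback h A J).toFinset

variable {h : ℕ → ℕ} {A : Finset ℕ} {J : Instance}

theorem mem_pullback {f : Fact} :
    f ∈ pullback h A J ↔ (∀ x ∈ f.args, x ∈ A) ∧ (⟨f.rel, f.args.map h⟩ : Fact) ∈ J :=
  Set.Finite.mem_toFinset _

theorem subset_pullback_adom {I K : Instance} (hh : IsHom h I K) (hKJ : K ⊆ J) :
    I ⊆ pullback h (adom I) J := fun f hf =>
  mem_pullback.2 ⟨fun _ hx => Finset.mem_biUnion.2 ⟨f, hf, List.mem_toFinset.2 hx⟩,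
    hKJ (hh f hf)⟩

theorem Rule.satisfiedIn_pullback {ρ : Rule} (hsafe : ∀ x ∈ ρ.headVars, x ∈ ρ.bodyVars)
    (hρ : ρ.SatisfiedIn J) : ρ.SatisfiedIn (pullback h A J) := by
  intro g hbody
  have hbody' : ∀ a ∈ ρ.body, (∀ x ∈ a.args, g x ∈ A) ∧ a.subst (h ∘ g) ∈ J := by
    intro a ha
    simpa [mem_pullback, Atom.subst, List.map_map] using hbody a ha
  obtain ⟨b, hb, hbJ⟩ := hρ (h ∘ g) fun a ha => (hbody' a ha).2
  refine ⟨b, hb, mem_pullback.2 ⟨?_, by simpa [Atom.subst, List.map_map] using hbJ⟩⟩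
  simp only [Atom.subst, List.mem_map]
  rintro _ ⟨x, hx, rfl⟩
  obtain ⟨_, hl, hxa⟩ :=
    List.mem_flatten.1 (hsafe x (List.mem_flatten.2 ⟨b.args, List.mem_map_of_mem hb, hx⟩))
  obtain ⟨a, ha, rfl⟩ := List.mem_map.1 hl
  exact (hbody' a ha).1 x hxa

end Pullback

theorem Program.Sat.of_isHom {P : Program} {I K : Instance} {h : ℕ → ℕ}
    (hsafe : ∀ ρ ∈ P.rules, ∀ x ∈ ρ.headVars, x ∈ ρ.bodyVars) (hh : IsHom h I K)
    (hI : P.Sat I) : P.Sat K := by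
  intro J hKJ hJ
  have hgoal := hI (pullback h (adom I) J) (subset_pullback_adom hh hKJ)
    fun ρ hρ => Rule.satisfiedIn_pullback (hsafe ρ hρ) (hJ ρ hρ)
  simpa using (mem_pullback.1 hgoal).2

section KTheta

variable {S : Schema} {D : List Constraint} {e : Finset RelSym → ℕ} {θ : Finset RelSym}

theorem mem_constraintRels {c : Constraint} {Q : RelSym} (hc : c ∈ D) (hQ : Q ∈ c.rels) :
    Q ∈ constraintRels D :=
  List.mem_flatten.2 ⟨c.rels, List.mem_map_of_mem hc, hQ⟩

theorem arity_le_one_of_mem_constraintRels (hD : ∀ c ∈ D, c.WF) {Q : RelSym}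
    (hQ : Q ∈ constraintRels D) : Q.arity ≤ 1 := by
  obtain ⟨_, hl, hQc⟩ := List.mem_flatten.1 hQ
  obtain ⟨c, hc, rfl⟩ := List.mem_map.1 hl
  obtain ⟨-, k, hk, hck⟩ := hD c hc
  exact hck Q hQc ▸ hk

theorem finite_setOf_is1Type (D : List Constraint) : {t | Is1Type D t}.Finite :=
  (constraintRels D).toFinset.powerset.finite_toSet.subset fun _ ht =>
    Finset.mem_powerset.2 fun Q hQ => List.mem_toFinset.2 (ht.1 Q hQ).2

theorem finite_setOf_KSpec (S : Schema) (D : List Constraint) (e : Finset RelSym → ℕ)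
    (θ : Finset RelSym) : {f | KSpec S D e θ f}.Finite := by
  have hT := finite_setOf_is1Type D
  refine ((hT.biUnion fun t _ => t.finite_toSet.image fun P => (⟨P, [e t]⟩ : Fact)).union
    ((S.finite_toSet.biUnion fun R _ => (finite_setOf_lists_length_eq hT R.arity).image
      fun ts => (⟨R, ts.map e⟩ : Fact)).union
    (θ.finite_toSet.image fun P => (⟨P, []⟩ : Fact)))).subset ?_
  rintro f (⟨t, ht, P, hP, rfl⟩ | ⟨R, hR, -, ts, hlen, hts, rfl⟩ | ⟨P, hP, rfl⟩)
  · exact Or.inl (Set.mem_biUnion ht ⟨P, hP, rfl⟩)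
  · exact Or.inr (Or.inl (Set.mem_biUnion hR ⟨ts, ⟨hlen, hts⟩, rfl⟩))
  · exact Or.inr (Or.inr ⟨P, hP, rfl⟩)

theorem exists_KSpec (S : Schema) (D : List Constraint) (e : Finset RelSym → ℕ)
    (θ : Finset RelSym) : ∃ K : Instance, ∀ f, f ∈ K ↔ KSpec S D e θ f :=
  ⟨_, fun _ => (finite_setOf_KSpec S D e θ).mem_toFinset⟩

theorem KSpec_of_mem_constraintRels {Q : RelSym} {args : List ℕ}
    (hQ : Q ∈ constraintRels D) (hf : KSpec S D e θ ⟨Q, args⟩) :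
    (Q ∈ θ ∧ args = []) ∨ ∃ t, Is1Type D t ∧ Q ∈ t ∧ args = [e t] := by
  rcases hf with ⟨t, ht, P, hP, hf⟩ | ⟨R, -, hR, ts, -, -, hf⟩ | ⟨P, hP, hf⟩
  · obtain ⟨rfl, rfl⟩ := Fact.mk.inj hf
    exact Or.inr ⟨t, ht, hP, rfl⟩
  · exact absurd ((Fact.mk.inj hf).1 ▸ hQ) hR
  · obtain ⟨rfl, rfl⟩ := Fact.mk.inj hf
    exact Or.inl ⟨hP, rfl⟩

variable {K : Instance}

theorem instanceOver_of_KSpec (hD : ConstraintsOver S D) (hθ : Is0Type D θ)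
    (hK : ∀ f, f ∈ K ↔ KSpec S D e θ f) : InstanceOver S K := by
  intro f hf
  rcases (hK f).1 hf with ⟨t, ht, P, hP, rfl⟩ | ⟨R, hR, -, ts, hlen, -, rfl⟩ | ⟨P, hP, rfl⟩
  · exact ⟨hD P (ht.1 P hP).2, (ht.1 P hP).1.symm⟩
  · exact ⟨hR, by simpa using hlen⟩
  · exact ⟨hD P (hθ.1 P hP).2, (hθ.1 P hP).1.symm⟩

theorem satisfiesAll_of_KSpec (he : Function.Injective e) (hθ : Is0Type D θ)
    (hK : ∀ f, f ∈ K ↔ KSpec S D e θ f) : SatisfiesAll D K := by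
  rintro c hc ⟨args, hargs⟩
  have hspec : ∀ Q ∈ c.rels, (Q ∈ θ ∧ args = []) ∨ ∃ t, Is1Type D t ∧ Q ∈ t ∧ args = [e t] :=
    fun Q hQ => KSpec_of_mem_constraintRels (mem_constraintRels hc hQ) ((hK _).1 (hargs Q hQ).2)
  obtain ⟨Q₀, hQ₀⟩ := List.exists_mem_of_ne_nil c.rels fun hnil => hθ.2 c hc (by simp [hnil])
  rcases hspec Q₀ hQ₀ with ⟨-, rfl⟩ | ⟨t₀, ht₀, -, rfl⟩
  · refine hθ.2 c hc fun Q hQ => ?_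
    rcases hspec Q hQ with ⟨hQθ, -⟩ | ⟨t, -, -, hnil⟩
    exacts [hQθ, absurd hnil.symm (List.cons_ne_nil _ _)]
  · -- injectivity of `e` puts every relation of `c` into the single 1-type `t₀`
    refine ht₀.2 c hc fun Q hQ => ?_
    rcases hspec Q hQ with ⟨-, hnil⟩ | ⟨t, -, hQt, het⟩
    exacts [absurd hnil (List.cons_ne_nil _ _), he (List.singleton_injective het) ▸ hQt]

end KTheta

section Types

/-- `typeOf D I []` is the 0-type of `I`, and `typeOf D I [a]` the 1-type of `a` in `I`. -/
def typeOf (D : List Constraint) (I : Instance) (args : List ℕ) : Finset RelSym :=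
  (constraintRels D).toFinset.filter fun Q => Q.arity = args.length ∧ (⟨Q, args⟩ : Fact) ∈ I

variable {S : Schema} {D : List Constraint} {I : Instance}

theorem mem_typeOf {Q : RelSym} {args : List ℕ} :
    Q ∈ typeOf D I args ↔
      Q ∈ constraintRels D ∧ Q.arity = args.length ∧ (⟨Q, args⟩ : Fact) ∈ I := by
  simp [typeOf]

theorem not_forall_mem_typeOf (hI : SatisfiesAll D I) {c : Constraint} (hc : c ∈ D)
    (args : List ℕ) : ¬ ∀ Q ∈ c.rels, Q ∈ typeOf D I args := fun hall =>
  hI c hc ⟨args, fun Q hQ => ⟨(mem_typeOf.1 (hall Q hQ)).2.1.symm, (mem_typeOf.1 (hall Q hQ)).2.2⟩⟩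

theorem is0Type_typeOf (hI : SatisfiesAll D I) : Is0Type D (typeOf D I []) :=
  ⟨fun _ hQ => ⟨(mem_typeOf.1 hQ).2.1, (mem_typeOf.1 hQ).1⟩,
    fun _ hc => not_forall_mem_typeOf hI hc []⟩

theorem is1Type_typeOf (hI : SatisfiesAll D I) (a : ℕ) : Is1Type D (typeOf D I [a]) :=
  ⟨fun _ hQ => ⟨(mem_typeOf.1 hQ).2.1, (mem_typeOf.1 hQ).1⟩,
    fun _ hc => not_forall_mem_typeOf hI hc [a]⟩

theorem isHom_typeOf_KSpec {e : Finset RelSym → ℕ} {K : Instance}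
    (hD : ∀ R ∈ constraintRels D, R.arity ≤ 1) (hIS : InstanceOver S I)
    (hI : SatisfiesAll D I) (hK : ∀ f, f ∈ K ↔ KSpec S D e (typeOf D I []) f) :
    IsHom (fun a => e (typeOf D I [a])) I K := by
  rintro ⟨R, as⟩ hf
  obtain ⟨hRS, hlen⟩ := hIS _ hf
  refine (hK _).2 ?_
  by_cases hRD : R ∈ constraintRels D
  · rcases Nat.le_one_iff_eq_zero_or_eq_one.1 (hD R hRD) with hR | hR
    · obtain rfl : as = [] := List.length_eq_zero_iff.1 (hlen.trans hR)
      exact Or.inr (Or.inr ⟨R, mem_typeOf.2 ⟨hRD, hR, hf⟩, rfl⟩)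
    · obtain ⟨a, rfl⟩ := List.length_eq_one_iff.1 (hlen.trans hR)
      exact Or.inl ⟨_, is1Type_typeOf hI a, R, mem_typeOf.2 ⟨hRD, hR, hf⟩, rfl⟩
  · refine Or.inr (Or.inl ⟨R, hRS, hRD, as.map fun a => typeOf D I [a], by simpa using hlen,
      ?_, by simp⟩)
    simp only [List.mem_map]
    rintro _ ⟨a, -, rfl⟩
    exact is1Type_typeOf hI a

end Types

theorem emptiness_iff_Ktheta_general (S : Schema) (P : Program) (D : List Constraint)
    (hP : BooleanMDDLogOver S P) (hD : ConstraintsOver S D) (hDwf : ∀ c ∈ D, c.WF)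
    (e : Finset RelSym → ℕ) (he : Function.Injective e) :
    P.EmptyWrt S D ↔
      ∀ θ : Finset RelSym, Is0Type D θ →
        ∀ K : Instance, (∀ f : Fact, f ∈ K ↔ KSpec S D e θ f) → ¬ P.Sat K := by
  constructor
  · intro hempty θ hθ K hK
    exact hempty K (instanceOver_of_KSpec hD hθ hK) (satisfiesAll_of_KSpec he hθ hK)
  · intro hKθ I hIS hID hsat
    obtain ⟨K, hK⟩ := exists_KSpec S D e (typeOf D I [])
    have hsafe : ∀ ρ ∈ P.rules, ∀ x ∈ ρ.headVars, x ∈ ρ.bodyVars :=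
      fun ρ hρ => (hP.1.1 ρ hρ).2.2
    have hhom := isHom_typeOf_KSpec (fun _ => arity_le_one_of_mem_constraintRels hDwf) hIS hID hK
    exact hKθ _ (is0Type_typeOf hID) K hK (hsat.of_isHom hsafe hhom)

/-- `Π` is empty w.r.t. `D` iff `K_θ ⊭ Π` for every 0-type `θ`,
where the constants of `K_θ` are the 1-types (encoded via an injection `e`). -/
theorem emptiness_iff_Ktheta (S : Schema) (P : Program) (D : List Constraint)
    (hP : BooleanMDDLogOver S P) (hD : ConstraintsOver S D) (hDwf : ∀ c ∈ D, c.WF)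
    (hss : P.SemiSimple D)
    (e : Finset RelSym → ℕ) (he : Function.Injective e) :
    P.EmptyWrt S D ↔
      ∀ θ : Finset RelSym, Is0Type D θ →
        ∀ K : Instance, (∀ f : Fact, f ∈ K ↔ KSpec S D e θ f) → ¬ P.Sat K :=
  emptiness_iff_Ktheta_general S P D hP hD hDwf e he

end MDDLogPaper
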